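/- Let TP, FN, FP be nonnegative real numbers with TP > 0. Define the Fowlkes–Mallows Index f = TP / √((TP + FN) · (TP + FP)). Then 1 − f ≤ (FN + FP) / (2·TP + FN + FP). -/
import Mathlib


/-- One minus the Fowlkes–Mallows Index is bounded above by the
Fowlkes–Mallows loss (FN + FP) / (2·TP + FN + FP). -/
theorem one_sub_FMI_le_FMI_loss (TP FN FP : ℝ) (hTP : 0 < TP) (hFN : 0 ≤ FN) (hFP : 0 ≤ FP) :
    1 - TP / Real.sqrt ((TP + FN) * (TP + FP)) ≤ (FN + FP) / (2 * TP + FN + FP) := by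
  set s := Real.sqrt ((TP + FN) * (TP + FP)) with hs
  have hprod : 0 < (TP + FN) * (TP + FP) := by positivity
  have hspos : 0 < s := Real.sqrt_pos.mpr hprod
  have hden : 0 < 2 * TP + FN + FP := by linarith
  -- AM-GM: s ≤ (2TP+FN+FP)/2
  have hamgm : s ≤ (2 * TP + FN + FP) / 2 := by
    rw [hs, show (2 * TP + FN + FP) / 2 = Real.sqrt (((2 * TP + FN + FP) / 2) ^ 2) from
      (Real.sqrt_sq (by linarith)).symm]
    apply Real.sqrt_le_sqrt
    nlinarith [sq_nonneg (FN - FP)]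
  have h1 : 2 * TP / (2 * TP + FN + FP) ≤ TP / s := by
    rw [div_le_div_iff₀ hden hspos]
    nlinarith
  have h2 : 1 - TP / s ≤ 1 - 2 * TP / (2 * TP + FN + FP) := by linarith
  have h3 : 1 - 2 * TP / (2 * TP + FN + FP) = (FN + FP) / (2 * TP + FN + FP) := by
    field_simp
    ring
  linarith
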